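/- arXiv:1802.02131 — 2 statements merged into one kernel-verified Lean document; each statement's English description precedes it below -/
import Mathlib

section
/- Let X₁ and X₂ be independent random variables with pmfs p_{X₁}, p_{X₂} on finite alphabets 𝒳₁, 𝒳₂. For j = 1,2, let X_j be randomly binned into W_j = B₁^{(j)}(X_j) ∈ [1:W̃_j] and F_j = B₂^{(j)}(X_j) ∈ [1:F̃_j] by a uniform random binning, with the binnings for j = 1 and j = 2 independent. For γ_j > 0 let D_{γ_j} = {x ∈ 𝒳_j : log(1/p_{X_j}(x)) > γ_j}. Then the expectation over the random binning of the total variation distance between the induced pmf P_{W₁W₂F₁F₂} and the uniform pmf on [1:W̃₁]×[1:W̃₂]×[1:F̃₁]×[1:F̃₂] is at most Σ_{j=1,2} ( P(X_j ∉ D_{γ_j}) + (1/2)·√(W̃_j·F̃_j·2^{−γ_j}) ). -/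
open Finset Real Filter

attribute [local instance] Classical.propDecidable

/-- `p` is a probability mass function on the finite type `α`. -/
def IsPMF {α : Type*} [Fintype α] (p : α → ℝ) : Prop :=
  (∀ a, 0 ≤ p a) ∧ ∑ a, p a = 1

/-- Shannon entropy (base-2) of the random variable `f` under the pmf `p`
(i.e. the entropy of the push-forward of `p` along `f`). -/
noncomputable def HOf {α β : Type*} [Fintype α] (p : α → ℝ) (f : α → β) : ℝ :=
  -∑ b ∈ Finset.univ.image f,
      (∑ a ∈ Finset.univ.filter (fun a => f a = b), p a) *
        Real.logb 2 (∑ a ∈ Finset.univ.filter (fun a => f a = b), p a)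

/-- Conditional entropy `H(f | g)` under the pmf `p`. -/
noncomputable def condHOf {α β γ : Type*} [Fintype α] (p : α → ℝ) (f : α → β) (g : α → γ) : ℝ :=
  HOf p (fun a => (f a, g a)) - HOf p g

/-- Mutual information `I(f; g)` under the pmf `p`. -/
noncomputable def miOf {α β γ : Type*} [Fintype α] (p : α → ℝ) (f : α → β) (g : α → γ) : ℝ :=
  HOf p f + HOf p g - HOf p (fun a => (f a, g a))

/-- Conditional mutual information `I(f; g | h)` under the pmf `p`. -/
noncomputable def cmiOf {α β γ δ : Type*} [Fintype α] (p : α → ℝ) (f : α → β) (g : α → γ)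
    (h : α → δ) : ℝ :=
  HOf p (fun a => (f a, h a)) + HOf p (fun a => (g a, h a))
    - HOf p (fun a => (f a, g a, h a)) - HOf p h

/-- Total variation distance between two pmfs on a finite type. -/
noncomputable def tvDist {α : Type*} [Fintype α] (p q : α → ℝ) : ℝ :=
  (1 / 2) * ∑ a, |p a - q a|

/-!
For one source with pmf `p` and a set `D` on which `p ≤ 2^(-γ)`, split the deviation of the bin
masses from uniform as `P_b(a) - 1/|A| = Z_D(b,a) + Z_{Dᶜ}(b,a)`, where
`Z_s(b,a) = ∑_{x ∈ s} p(x) (𝟙[b x = a] - 1/|A|)` is `binDeviation p s b a`.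
Whatever the binning, `∑ₐ |Z_{Dᶜ}(b,a)| ≤ 2 P(Dᶜ)`. For `Z_D`, the values `b x` of a uniformly
random binning are independent and uniform, so the centred summands are orthogonal and
`𝔼 Z_D(b,a)² ≤ ∑_{x ∈ D} p(x)² / |A| ≤ 2^(-γ) / |A|`; Cauchy–Schwarz and summation over the
`|A|` bins give `½ √(|A| 2^(-γ))`. For two independent sources both the induced pmf and the
uniform pmf are products, and the total variation distance between products is at most the sum
of the distances between the factors.
-/

open scoped BigOperators

section RandomFunction

variable {X A : Type*} [Fintype X] [DecidableEq X] [Fintype A] [Nonempty A]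

lemma expect_comp_eval {M : Type*} [AddCommMonoid M] [Module ℚ≥0 M] (x : X) (g : A → M) :
    𝔼 b : X → A, g (b x) = 𝔼 a, g a := by
  rw [Fintype.expect_equiv (Equiv.funSplitAt x A) (fun b => g (b x)) (fun y => g y.1) fun _ => rfl,
    ← univ_product_univ, expect_product]
  simp only [Fintype.expect_const]

lemma expect_comp_eval_mul_comp_eval {x y : X} (hxy : x ≠ y) (g h : A → ℝ) :
    𝔼 b : X → A, g (b x) * h (b y) = (𝔼 a, g a) * 𝔼 a, h a := by
  rw [Fintype.expect_equiv (Equiv.funSplitAt x A) (fun b => g (b x) * h (b y))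
      (fun z => g z.1 * h (z.2 ⟨y, hxy.symm⟩)) fun _ => rfl,
    ← univ_product_univ, expect_product, expect_mul]
  simp only [← mul_expect, expect_comp_eval (⟨y, hxy.symm⟩ : {j // j ≠ x}) h]

lemma expect_sq_sum_comp_eval (s : Finset X) (f : X → A → ℝ) (hf : ∀ x ∈ s, 𝔼 a, f x a = 0) :
    𝔼 b : X → A, (∑ x ∈ s, f x (b x)) ^ 2 = ∑ x ∈ s, 𝔼 a, f x a ^ 2 := by
  simp only [sq, sum_mul_sum]
  rw [expect_sum_comm]
  refine sum_congr rfl fun x hx => ?_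
  rw [expect_sum_comm, sum_eq_single_of_mem x hx fun y hy hyx => ?_]
  · exact expect_comp_eval x fun a => f x a * f x a
  · rw [expect_comp_eval_mul_comp_eval hyx.symm, hf y hy, mul_zero]

end RandomFunction

lemma expect_abs_le_sqrt_expect_sq {ι : Type*} [Fintype ι] [Nonempty ι] (f : ι → ℝ) :
    𝔼 i, |f i| ≤ √(𝔼 i, f i ^ 2) := by
  apply Real.le_sqrt_of_sq_le
  simpa [sq_abs] using expect_mul_sq_le_sq_mul_sq univ (fun i => |f i|) 1

lemma expect_fst_add_snd {ι κ M : Type*} [Fintype ι] [Fintype κ] [Nonempty ι] [Nonempty κ]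
    [AddCommMonoid M] [Module ℚ≥0 M] (f : ι → M) (g : κ → M) :
    𝔼 x : ι × κ, (f x.1 + g x.2) = 𝔼 i, f i + 𝔼 j, g j := by
  rw [expect_add_distrib, ← univ_product_univ, expect_product, expect_product, expect_comm]
  simp only [Fintype.expect_const]

lemma tvDist_comp_equiv {α β : Type*} [Fintype α] [Fintype β] (e : α ≃ β) (p q : β → ℝ) :
    tvDist (p ∘ e) (q ∘ e) = tvDist p q := by
  simp only [tvDist, Function.comp_apply, e.sum_comp fun b => |p b - q b|]

lemma tvDist_mul_le {α β : Type*} [Fintype α] [Fintype β] (p : α → ℝ) {q : α → ℝ} {r : β → ℝ}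
    (s : β → ℝ) (hq : IsPMF q) (hr : IsPMF r) :
    tvDist (fun ab : α × β => p ab.1 * r ab.2) (fun ab => q ab.1 * s ab.2)
      ≤ tvDist p q + tvDist r s := by
  have key : ∀ ab : α × β, |p ab.1 * r ab.2 - q ab.1 * s ab.2|
      ≤ |p ab.1 - q ab.1| * r ab.2 + q ab.1 * |r ab.2 - s ab.2| := fun ab => by
    rw [show p ab.1 * r ab.2 - q ab.1 * s ab.2
        = (p ab.1 - q ab.1) * r ab.2 + q ab.1 * (r ab.2 - s ab.2) by ring]
    refine (abs_add_le _ _).trans_eq ?_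
    rw [abs_mul, abs_mul, abs_of_nonneg (hr.1 _), abs_of_nonneg (hq.1 _)]
  have hsplit : ∑ ab : α × β, (|p ab.1 - q ab.1| * r ab.2 + q ab.1 * |r ab.2 - s ab.2|)
      = ∑ a, |p a - q a| + ∑ b, |r b - s b| := by
    rw [sum_add_distrib, Fintype.sum_prod_type, Fintype.sum_prod_type]
    simp only [← mul_sum, ← sum_mul, hr.2, hq.2, mul_one, one_mul]
  simp only [tvDist]
  linarith [sum_le_sum fun ab (_ : ab ∈ univ) => key ab]

noncomputable section Binning

variable {X A : Type*} [Fintype A]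

variable (A) in
def uniformPMF : A → ℝ := fun _ => (Fintype.card A : ℝ)⁻¹

def centeredIndicator (a c : A) : ℝ := (if c = a then 1 else 0) - (Fintype.card A : ℝ)⁻¹

def binDeviation (p : X → ℝ) (s : Finset X) (b : X → A) (a : A) : ℝ :=
  ∑ x ∈ s, p x * centeredIndicator a (b x)

lemma isPMF_uniformPMF [Nonempty A] : IsPMF (uniformPMF A) :=
  ⟨fun _ => inv_nonneg.2 (Nat.cast_nonneg _), by simp [uniformPMF]⟩

lemma expect_centeredIndicator [Nonempty A] (a : A) : 𝔼 c, centeredIndicator a c = 0 := by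
  simp [centeredIndicator, expect_sub_distrib]

lemma expect_centeredIndicator_sq_le [Nonempty A] (a : A) :
    𝔼 c, centeredIndicator a c ^ 2 ≤ (Fintype.card A : ℝ)⁻¹ := by
  set m := (Fintype.card A : ℝ)⁻¹
  have hsq : ∀ c, centeredIndicator a c ^ 2 = (1 - 2 * m) * (if c = a then 1 else 0) + m ^ 2 := by
    intro c
    rw [centeredIndicator]
    split_ifs <;> ring
  have hm : 0 < m := by positivity
  have hmN : m * Fintype.card A = 1 := inv_mul_cancel₀ (by positivity)
  simp only [hsq, Fintype.expect_eq_sum_div_card, sum_add_distrib, ← mul_sum, sum_ite_eq',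
    mem_univ, if_true, sum_const, card_univ, nsmul_eq_mul]
  rw [div_le_iff₀ (by positivity)]
  nlinarith [hmN, hm]

lemma sum_abs_centeredIndicator_le (c : A) : ∑ a, |centeredIndicator a c| ≤ 2 := by
  calc ∑ a, |centeredIndicator a c|
      ≤ ∑ a, ((if c = a then 1 else 0) + (Fintype.card A : ℝ)⁻¹) :=
        sum_le_sum fun a _ => (abs_sub _ _).trans_eq <| by
          rw [abs_of_nonneg (by positivity), abs_of_nonneg (by positivity)]
    _ ≤ 2 := by
        simp only [sum_add_distrib, sum_ite_eq, mem_univ, if_true, sum_const, card_univ,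
          nsmul_eq_mul]
        linarith [mul_inv_le_one (a := (Fintype.card A : ℝ))]

lemma sum_abs_binDeviation_le {p : X → ℝ} (hp : ∀ x, 0 ≤ p x) (s : Finset X) (b : X → A) :
    ∑ a, |binDeviation p s b a| ≤ 2 * ∑ x ∈ s, p x := by
  calc ∑ a, |binDeviation p s b a| ≤ ∑ a, ∑ x ∈ s, p x * |centeredIndicator a (b x)| :=
        sum_le_sum fun a _ => (abs_sum_le_sum_abs _ _).trans_eq <| by
          simp only [abs_mul, abs_of_nonneg (hp _)]
    _ = ∑ x ∈ s, p x * ∑ a, |centeredIndicator a (b x)| := by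
        rw [sum_comm]
        simp only [mul_sum]
    _ ≤ ∑ x ∈ s, p x * 2 :=
        sum_le_sum fun x _ => mul_le_mul_of_nonneg_left (sum_abs_centeredIndicator_le _) (hp x)
    _ = 2 * ∑ x ∈ s, p x := by rw [← sum_mul, mul_comm]

variable [Fintype X]

def pmfMap (p : X → ℝ) (b : X → A) (a : A) : ℝ :=
  ∑ x ∈ univ.filter (fun x => b x = a), p x

lemma isPMF_pmfMap {p : X → ℝ} (hp : IsPMF p) (b : X → A) : IsPMF (pmfMap p b) :=
  ⟨fun _ => sum_nonneg fun x _ => hp.1 x, (sum_fiberwise univ b p).trans hp.2⟩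

lemma pmfMap_sub_inv_card {p : X → ℝ} (hp : ∑ x, p x = 1) (s : Finset X) (b : X → A) (a : A) :
    pmfMap p b a - (Fintype.card A : ℝ)⁻¹ = binDeviation p s b a + binDeviation p sᶜ b a := by
  rw [binDeviation, binDeviation, sum_add_sum_compl, pmfMap, sum_filter]
  simp only [centeredIndicator, mul_sub, sum_sub_distrib, ← sum_mul, hp, one_mul, mul_ite, mul_one,
    mul_zero]

lemma tvDist_pmfMap_uniformPMF_le {p : X → ℝ} (hp : IsPMF p) (s : Finset X) (b : X → A) :
    tvDist (pmfMap p b) (uniformPMF A) ≤ ∑ x ∈ sᶜ, p x + 1 / 2 * ∑ a, |binDeviation p s b a| := by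
  calc tvDist (pmfMap p b) (uniformPMF A)
      = 1 / 2 * ∑ a, |binDeviation p s b a + binDeviation p sᶜ b a| := by
        simp only [tvDist, uniformPMF, pmfMap_sub_inv_card hp.2 s]
    _ ≤ 1 / 2 * (∑ a, |binDeviation p s b a| + ∑ a, |binDeviation p sᶜ b a|) := by
        rw [← sum_add_distrib]
        gcongr
        exact abs_add_le _ _
    _ ≤ 1 / 2 * (∑ a, |binDeviation p s b a| + 2 * ∑ x ∈ sᶜ, p x) := by
        gcongr
        exact sum_abs_binDeviation_le hp.1 _ _
    _ = _ := by ring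

lemma expect_binDeviation_sq_le [Nonempty A] {p : X → ℝ} (hp : ∀ x, 0 ≤ p x) {s : Finset X}
    {ε : ℝ} (hs : ∀ x ∈ s, p x ≤ ε) (a : A) :
    𝔼 b : X → A, binDeviation p s b a ^ 2 ≤ ε * (∑ x ∈ s, p x) / Fintype.card A := by
  have hmean : ∀ x ∈ s, 𝔼 c, p x * centeredIndicator a c = 0 := fun x _ => by
    rw [← mul_expect, expect_centeredIndicator, mul_zero]
  calc 𝔼 b : X → A, binDeviation p s b a ^ 2
      = ∑ x ∈ s, 𝔼 c, (p x * centeredIndicator a c) ^ 2 :=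
        expect_sq_sum_comp_eval s (fun x c => p x * centeredIndicator a c) hmean
    _ = ∑ x ∈ s, p x ^ 2 * 𝔼 c, centeredIndicator a c ^ 2 := by
        simp only [mul_pow, mul_expect]
    _ ≤ ∑ x ∈ s, ε * p x * (Fintype.card A : ℝ)⁻¹ := by
        refine sum_le_sum fun x hx => mul_le_mul ?_ (expect_centeredIndicator_sq_le a)
          (expect_nonneg fun _ _ => sq_nonneg _) (mul_nonneg ((hp x).trans (hs x hx)) (hp x))
        rw [sq]
        exact mul_le_mul_of_nonneg_right (hs x hx) (hp x)
    _ = ε * (∑ x ∈ s, p x) / Fintype.card A := by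
        rw [← sum_mul, ← mul_sum, div_eq_mul_inv]

theorem expect_tvDist_pmfMap_uniformPMF_le [Nonempty A] {p : X → ℝ} (hp : IsPMF p)
    {s : Finset X} {ε : ℝ} (hε : 0 ≤ ε) (hs : ∀ x ∈ s, p x ≤ ε) :
    𝔼 b : X → A, tvDist (pmfMap p b) (uniformPMF A)
      ≤ ∑ x ∈ sᶜ, p x + 1 / 2 * √(Fintype.card A * ε) := by
  have hN : (0 : ℝ) < Fintype.card A := by positivity
  have hmass : ∑ x ∈ s, p x ≤ 1 := hp.2 ▸ sum_le_univ_sum_of_nonneg hp.1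
  have habs : ∀ a : A, 𝔼 b : X → A, |binDeviation p s b a| ≤ √(ε / Fintype.card A) := fun a =>
    (expect_abs_le_sqrt_expect_sq _).trans <| Real.sqrt_le_sqrt <|
      (expect_binDeviation_sq_le hp.1 hs a).trans <| by
        gcongr
        exact mul_le_of_le_one_right hε hmass
  have hsqrt : (Fintype.card A : ℝ) * √(ε / Fintype.card A) = √(Fintype.card A * ε) := by
    rw [show (Fintype.card A : ℝ) * ε = Fintype.card A ^ 2 * (ε / Fintype.card A) by field_simp,
      Real.sqrt_mul (sq_nonneg _), Real.sqrt_sq hN.le]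
  calc 𝔼 b : X → A, tvDist (pmfMap p b) (uniformPMF A)
      ≤ 𝔼 b : X → A, (∑ x ∈ sᶜ, p x + 1 / 2 * ∑ a, |binDeviation p s b a|) :=
        expect_le_expect fun b _ => tvDist_pmfMap_uniformPMF_le hp s b
    _ = ∑ x ∈ sᶜ, p x + 1 / 2 * ∑ a, 𝔼 b : X → A, |binDeviation p s b a| := by
        rw [expect_add_distrib, Fintype.expect_const, ← mul_expect, expect_sum_comm]
    _ ≤ ∑ x ∈ sᶜ, p x + 1 / 2 * ∑ _a : A, √(ε / Fintype.card A) := by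
        gcongr with a
        exact habs a
    _ = ∑ x ∈ sᶜ, p x + 1 / 2 * √(Fintype.card A * ε) := by
        rw [sum_const, card_univ, nsmul_eq_mul, hsqrt]

end Binning

/-- The `DecidableEq` binders give the filter on the right the decidability instance it gets for
concrete codomains such as `Fin m × Fin n`, rather than the classical one. -/
lemma pmfMap_mul_pmfMap {X Y A B : Type*} [Fintype X] [Fintype Y] [DecidableEq A]
    [DecidableEq B] (p : X → ℝ) (q : Y → ℝ) (b : X → A) (c : Y → B) (a : A) (a' : B) :
    pmfMap p b a * pmfMap q c a'
      = ∑ x ∈ univ.filter (fun x : X × Y => b x.1 = a ∧ c x.2 = a'), p x.1 * q x.2 := by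
  rw [pmfMap, pmfMap, sum_mul_sum, ← sum_product']
  congr 1
  ext x
  simp

lemma tvDist_joint_bins_le {X1 X2 : Type*} [Fintype X1] [Fintype X2] {W1 F1 W2 F2 : ℕ}
    [NeZero W1] [NeZero F1] (p1 : X1 → ℝ) {p2 : X2 → ℝ} (h2 : IsPMF p2)
    (b1 : X1 → Fin W1 × Fin F1) (b2 : X2 → Fin W2 × Fin F2) :
    tvDist
        (fun wf : (Fin W1 × Fin W2) × Fin F1 × Fin F2 =>
          ∑ x ∈ univ.filter (fun x : X1 × X2 =>
              b1 x.1 = (wf.1.1, wf.2.1) ∧ b2 x.2 = (wf.1.2, wf.2.2)),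
            p1 x.1 * p2 x.2)
        (fun _ => 1 / ((W1 * W2 * F1 * F2 : ℕ) : ℝ))
      ≤ tvDist (pmfMap p1 b1) (uniformPMF _) + tvDist (pmfMap p2 b2) (uniformPMF _) := by
  rw [← tvDist_comp_equiv (Equiv.prodProdProdComm (Fin W1) (Fin F1) (Fin W2) (Fin F2))]
  convert tvDist_mul_le (pmfMap p1 b1) (uniformPMF _) isPMF_uniformPMF (isPMF_pmfMap h2 b2)
    using 2 <;> funext y
  · exact (pmfMap_mul_pmfMap p1 p2 b1 b2 y.1 y.2).symm
  · simp only [Function.comp_apply, uniformPMF, Fintype.card_prod, Fintype.card_fin]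
    push_cast
    ring

lemma le_two_rpow_neg_of_lt_logb_one_div {p γ : ℝ} (hp : 0 ≤ p)
    (h : γ < Real.logb 2 (1 / p)) : p ≤ 2 ^ (-γ) := by
  rcases hp.eq_or_lt with rfl | hp
  · positivity
  rw [Real.rpow_neg zero_le_two, ← one_div]
  exact ((lt_one_div (by positivity) hp).1
    ((Real.lt_logb_iff_rpow_lt one_lt_two (by positivity)).1 h)).le

theorem random_binning_tv_bound_general {X1 X2 : Type} [Fintype X1] [Fintype X2]
    (p1 : X1 → ℝ) (p2 : X2 → ℝ) (h1 : IsPMF p1) (h2 : IsPMF p2)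
    (W1 F1 W2 F2 : ℕ) (hW1 : 0 < W1) (hF1 : 0 < F1) (hW2 : 0 < W2) (hF2 : 0 < F2)
    (γ1 γ2 : ℝ) :
    (1 / (Fintype.card ((X1 → Fin W1 × Fin F1) × (X2 → Fin W2 × Fin F2)) : ℝ)) *
        ∑ b : (X1 → Fin W1 × Fin F1) × (X2 → Fin W2 × Fin F2),
          tvDist
            (fun wf : (Fin W1 × Fin W2) × Fin F1 × Fin F2 =>
              ∑ x ∈ Finset.univ.filter (fun x : X1 × X2 =>
                  b.1 x.1 = (wf.1.1, wf.2.1) ∧ b.2 x.2 = (wf.1.2, wf.2.2)),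
                p1 x.1 * p2 x.2)
            (fun _ : (Fin W1 × Fin W2) × Fin F1 × Fin F2 =>
              1 / ((W1 * W2 * F1 * F2 : ℕ) : ℝ))
      ≤ ((∑ x ∈ Finset.univ.filter (fun x : X1 => ¬ γ1 < Real.logb 2 (1 / p1 x)), p1 x)
            + (1 / 2) * Real.sqrt (((W1 * F1 : ℕ) : ℝ) * (2 : ℝ) ^ (-γ1)))
        + ((∑ x ∈ Finset.univ.filter (fun x : X2 => ¬ γ2 < Real.logb 2 (1 / p2 x)), p2 x)
            + (1 / 2) * Real.sqrt (((W2 * F2 : ℕ) : ℝ) * (2 : ℝ) ^ (-γ2))) := by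
  have : NeZero W1 := ⟨hW1.ne'⟩
  have : NeZero F1 := ⟨hF1.ne'⟩
  have : NeZero W2 := ⟨hW2.ne'⟩
  have : NeZero F2 := ⟨hF2.ne'⟩
  have hD1 : ∀ x ∈ univ.filter (fun x => γ1 < Real.logb 2 (1 / p1 x)), p1 x ≤ 2 ^ (-γ1) :=
    fun x hx => le_two_rpow_neg_of_lt_logb_one_div (h1.1 x) (mem_filter.1 hx).2
  have hD2 : ∀ x ∈ univ.filter (fun x => γ2 < Real.logb 2 (1 / p2 x)), p2 x ≤ 2 ^ (-γ2) :=
    fun x hx => le_two_rpow_neg_of_lt_logb_one_div (h2.1 x) (mem_filter.1 hx).2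
  rw [one_div_mul_eq_div, ← Fintype.expect_eq_sum_div_card, ← compl_filter, ← compl_filter]
  calc _ ≤ 𝔼 b : (X1 → Fin W1 × Fin F1) × (X2 → Fin W2 × Fin F2),
          (tvDist (pmfMap p1 b.1) (uniformPMF _) + tvDist (pmfMap p2 b.2) (uniformPMF _)) :=
        expect_le_expect fun b _ => tvDist_joint_bins_le p1 h2 b.1 b.2
    _ = 𝔼 b1 : X1 → Fin W1 × Fin F1, tvDist (pmfMap p1 b1) (uniformPMF _)
          + 𝔼 b2 : X2 → Fin W2 × Fin F2, tvDist (pmfMap p2 b2) (uniformPMF _) :=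
        expect_fst_add_snd (fun b1 => tvDist (pmfMap p1 b1) (uniformPMF _))
          (fun b2 => tvDist (pmfMap p2 b2) (uniformPMF _))
    _ ≤ _ := add_le_add (expect_tvDist_pmfMap_uniformPMF_le h1 (by positivity) hD1)
        (expect_tvDist_pmfMap_uniformPMF_le h2 (by positivity) hD2)
    _ = _ := by simp only [Fintype.card_prod, Fintype.card_fin, Nat.cast_mul]

/-- Lemma 1: for two independent sources, each randomly and uniformly binned
into two indices, the expected total variation distance between the induced distribution of
the bins and the uniform distribution is bounded via the sets `D_{γ_j}`. -/
theorem random_binning_tv_bound {X1 X2 : Type} [Fintype X1] [Fintype X2]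
    (p1 : X1 → ℝ) (p2 : X2 → ℝ) (h1 : IsPMF p1) (h2 : IsPMF p2)
    (W1 F1 W2 F2 : ℕ) (hW1 : 0 < W1) (hF1 : 0 < F1) (hW2 : 0 < W2) (hF2 : 0 < F2)
    (γ1 γ2 : ℝ) (hγ1 : 0 < γ1) (hγ2 : 0 < γ2) :
    (1 / (Fintype.card ((X1 → Fin W1 × Fin F1) × (X2 → Fin W2 × Fin F2)) : ℝ)) *
        ∑ b : (X1 → Fin W1 × Fin F1) × (X2 → Fin W2 × Fin F2),
          tvDist
            (fun wf : (Fin W1 × Fin W2) × Fin F1 × Fin F2 =>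
              ∑ x ∈ Finset.univ.filter (fun x : X1 × X2 =>
                  b.1 x.1 = (wf.1.1, wf.2.1) ∧ b.2 x.2 = (wf.1.2, wf.2.2)),
                p1 x.1 * p2 x.2)
            (fun _ : (Fin W1 × Fin W2) × Fin F1 × Fin F2 =>
              1 / ((W1 * W2 * F1 * F2 : ℕ) : ℝ))
      ≤ ((∑ x ∈ Finset.univ.filter (fun x : X1 => ¬ γ1 < Real.logb 2 (1 / p1 x)), p1 x)
            + (1 / 2) * Real.sqrt (((W1 * F1 : ℕ) : ℝ) * (2 : ℝ) ^ (-γ1)))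
        + ((∑ x ∈ Finset.univ.filter (fun x : X2 => ¬ γ2 < Real.logb 2 (1 / p2 x)), p2 x)
            + (1 / 2) * Real.sqrt (((W2 * F2 : ℕ) : ℝ) * (2 : ℝ) ^ (-γ2))) :=
  random_binning_tv_bound_general p1 p2 h1 h2 W1 F1 W2 F2 hW1 hF1 hW2 hF2 γ1 γ2
end

section
/- Let (U,X) be a pair of random variables with joint pmf p_{UX} on a finite alphabet 𝒰×𝒳 with p_{UX}(u,x) > 0 for all (u,x), |𝒰| ≥ 2, and let ε > 0. Then there exists β > 0 such that for all n ≥ 1, all μ ∈ [0:n], and every subset S ⊆ [1:n] with |S| = μ, if (U₁,X₁), …, (U_n,X_n) are i.i.d. copies of (U,X), then P( Σ_{k∈S} log(1/p_{U|X}(U_k|X_k)) + Σ_{k∉S} log(1/p_U(U_k)) ≤ (1−ε)·[ μ·H(U|X) + (n−μ)·H(U) ] ) ≤ exp(−βn). -/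
open Finset Real Filter

attribute [local instance] Classical.propDecidable

/-!
Each summand of the mixed self-information is a nonnegative bounded random variable whose mean is
`H(U|X)` on the positions in `S` and `H(U)` elsewhere; both means are positive since `p` has full
support and `|𝒰| ≥ 2`. The exponential Chernoff bound, with `exp (-y) ≤ 1 - y + y²` controlling
the moment generating function, then gives the lower-tail bound `exp (-ε² m² n / (4 B²))`, where
`m` is the smaller mean and `B` bounds the self-informations.
-/

lemma exp_neg_le_one_sub_add_sq {y : ℝ} (hy : 0 ≤ y) : exp (-y) ≤ 1 - y + y ^ 2 := by
  have hpos : 0 ≤ 1 - y + y ^ 2 := by nlinarith [sq_nonneg (y - 1 / 2)]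
  have hprod : 1 ≤ (1 - y + y ^ 2) * exp y :=
    calc 1 ≤ (1 - y + y ^ 2) * (y + 1) := by nlinarith [pow_nonneg hy 3]
      _ ≤ (1 - y + y ^ 2) * exp y := mul_le_mul_of_nonneg_left (add_one_le_exp y) hpos
  calc exp (-y) ≤ exp (-y) * ((1 - y + y ^ 2) * exp y) :=
        le_mul_of_one_le_right (exp_nonneg _) hprod
    _ = 1 - y + y ^ 2 := by rw [mul_left_comm, ← exp_add, neg_add_cancel, exp_zero, mul_one]

lemma sum_ite_mem_eq_sum_add_sum_compl {ι M : Type*} [Fintype ι] [DecidableEq ι] [AddCommMonoid M]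
    (S : Finset ι) (f g : ι → M) :
    ∑ k, (if k ∈ S then f k else g k) = ∑ k ∈ S, f k + ∑ k ∈ Sᶜ, g k := by
  rw [sum_ite]
  simp [compl_eq_univ_sdiff, sdiff_eq_filter]

section Chernoff

variable {α ι : Type*} [Fintype α] [Fintype ι] [DecidableEq ι] {p : α → ℝ}

lemma sum_prod_filter_le_exp_mul_prod (hp₀ : ∀ a, 0 ≤ p a) (f : ι → α → ℝ) {t : ℝ} (ht : 0 ≤ t)
    (c : ℝ) :
    ∑ z ∈ univ.filter (fun z : ι → α => ∑ k, f k (z k) ≤ c), ∏ k, p (z k)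
      ≤ exp (t * c) * ∏ k, ∑ a, p a * exp (-(t * f k a)) := by
  calc _ ≤ ∑ z ∈ univ.filter (fun z : ι → α => ∑ k, f k (z k) ≤ c),
          (∏ k, p (z k)) * exp (t * (c - ∑ k, f k (z k))) :=
        sum_le_sum fun z hz => le_mul_of_one_le_right (prod_nonneg fun k _ => hp₀ _)
          (one_le_exp (mul_nonneg ht (sub_nonneg.2 (mem_filter.1 hz).2)))
    _ ≤ ∑ z : ι → α, (∏ k, p (z k)) * exp (t * (c - ∑ k, f k (z k))) :=
        sum_le_sum_of_subset_of_nonneg (filter_subset _ _) fun z _ _ =>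
          mul_nonneg (prod_nonneg fun k _ => hp₀ _) (exp_nonneg _)
    _ = exp (t * c) * ∏ k, ∑ a, p a * exp (-(t * f k a)) := by
        rw [Fintype.prod_sum, mul_sum]
        refine sum_congr rfl fun z _ => ?_
        rw [prod_mul_distrib, ← exp_sum, mul_sub, sub_eq_add_neg, mul_sum, ← sum_neg_distrib,
          exp_add]
        ring

end Chernoff

namespace IsPMF

variable {α ι : Type*} [Fintype α] [Fintype ι] [DecidableEq ι] {p : α → ℝ}

lemma sum_mul_exp_neg_le (hp : IsPMF p) {f : α → ℝ} {B t : ℝ} (hf₀ : ∀ a, 0 ≤ f a)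
    (hfB : ∀ a, f a ≤ B) (ht : 0 ≤ t) :
    ∑ a, p a * exp (-(t * f a)) ≤ exp (-(t * ∑ a, p a * f a) + t ^ 2 * B ^ 2) := by
  have hpoint : ∀ a, exp (-(t * f a)) ≤ 1 - t * f a + t ^ 2 * B ^ 2 := fun a => by
    have hsq : (t * f a) ^ 2 ≤ t ^ 2 * B ^ 2 := by
      rw [mul_pow]; gcongr
      exacts [hf₀ a, hfB a]
    linarith [exp_neg_le_one_sub_add_sq (mul_nonneg ht (hf₀ a))]
  calc ∑ a, p a * exp (-(t * f a)) ≤ ∑ a, p a * (1 - t * f a + t ^ 2 * B ^ 2) :=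
        sum_le_sum fun a _ => mul_le_mul_of_nonneg_left (hpoint a) (hp.1 a)
    _ = -(t * ∑ a, p a * f a) + t ^ 2 * B ^ 2 + 1 := by
        simp only [mul_add, mul_sub, mul_one, sum_add_distrib, sum_sub_distrib, ← sum_mul, hp.2,
          mul_left_comm _ t, ← mul_sum]
        ring
    _ ≤ _ := add_one_le_exp _

lemma sum_prod_filter_le_exp (hp : IsPMF p) {f : ι → α → ℝ} {B t : ℝ}
    (hf₀ : ∀ k a, 0 ≤ f k a) (hfB : ∀ k a, f k a ≤ B) (ht : 0 ≤ t) (c : ℝ) :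
    ∑ z ∈ univ.filter (fun z : ι → α => ∑ k, f k (z k) ≤ c), ∏ k, p (z k)
      ≤ exp (t * c - t * ∑ k, ∑ a, p a * f k a + Fintype.card ι * (t ^ 2 * B ^ 2)) := by
  calc _ ≤ exp (t * c) * ∏ k, ∑ a, p a * exp (-(t * f k a)) :=
        sum_prod_filter_le_exp_mul_prod hp.1 f ht c
    _ ≤ exp (t * c) * ∏ k, exp (-(t * ∑ a, p a * f k a) + t ^ 2 * B ^ 2) := by
        gcongr with k
        · exact fun k _ => sum_nonneg fun a _ => mul_nonneg (hp.1 a) (exp_nonneg _)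
        · exact hp.sum_mul_exp_neg_le (hf₀ k) (hfB k) ht
    _ = _ := by
        rw [← exp_sum, ← exp_add, sum_add_distrib, sum_neg_distrib, ← mul_sum, sum_const,
          card_univ, nsmul_eq_mul]
        ring_nf

lemma sum_prod_filter_le_exp_neg_sq (hp : IsPMF p) {f : ι → α → ℝ} {B ε m : ℝ}
    (hf₀ : ∀ k a, 0 ≤ f k a) (hfB : ∀ k a, f k a ≤ B) (hB : 0 < B) (hε : 0 ≤ ε) (hm : 0 ≤ m)
    (hmf : ∀ k, m ≤ ∑ a, p a * f k a) :
    ∑ z ∈ univ.filter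
        (fun z : ι → α => ∑ k, f k (z k) ≤ (1 - ε) * ∑ k, ∑ a, p a * f k a), ∏ k, p (z k)
      ≤ exp (-(ε ^ 2 * m ^ 2 / (4 * B ^ 2)) * Fintype.card ι) := by
  -- the choice of `t` minimising `-t ε m + t² B²`
  set t := ε * m / (2 * B ^ 2) with ht
  refine (hp.sum_prod_filter_le_exp (B := B) (t := t) hf₀ hfB (by positivity) _).trans
    (exp_le_exp.2 ?_)
  have hmean : Fintype.card ι * m ≤ ∑ k, ∑ a, p a * f k a := by
    simpa [card_univ] using sum_le_sum fun k (_ : k ∈ univ) => hmf k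
  calc t * ((1 - ε) * ∑ k, ∑ a, p a * f k a) - t * ∑ k, ∑ a, p a * f k a
        + Fintype.card ι * (t ^ 2 * B ^ 2)
      = -(t * ε * ∑ k, ∑ a, p a * f k a) + Fintype.card ι * (t ^ 2 * B ^ 2) := by ring
    _ ≤ -(t * ε * (Fintype.card ι * m)) + Fintype.card ι * (t ^ 2 * B ^ 2) := by gcongr
    _ = _ := by rw [ht]; field_simp; ring

end IsPMF

lemma sum_mul_logb_fiber_mass {α β : Type*} [Fintype α] (p : α → ℝ) (f : α → β) :
    ∑ a, p a * logb 2 (∑ a' ∈ univ.filter (fun a' => f a' = f a), p a') = -HOf p f := by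
  rw [HOf, neg_neg, ← sum_fiberwise_of_maps_to (t := univ.image f)
    (fun a _ => mem_image_of_mem f (mem_univ a))]
  refine sum_congr rfl fun b _ => ?_
  rw [sum_mul]
  exact sum_congr rfl fun a ha => by rw [(mem_filter.1 ha).2]

section SelfInformation

variable {U X : Type*} [Fintype U] {p : U × X → ℝ}

noncomputable def condSelfInfo (p : U × X → ℝ) (a : U × X) : ℝ :=
  logb 2 (1 / (p a / ∑ u, p (u, a.2)))

lemma condSelfInfo_pos (hpos : ∀ a, 0 < p a) (hU : 1 < Fintype.card U) (a : U × X) :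
    0 < condSelfInfo p a := by
  obtain ⟨u, hu⟩ := Fintype.exists_ne_of_one_lt_card hU a.1
  have hlt : p a < ∑ u, p (u, a.2) :=
    single_lt_sum (f := fun u => p (u, a.2)) hu (mem_univ _) (mem_univ _) (hpos _)
      fun _ _ _ => (hpos _).le
  have hmass : 0 < ∑ u, p (u, a.2) := (hpos a).trans hlt
  exact logb_pos one_lt_two
    (one_lt_one_div (div_pos (hpos a) hmass) ((div_lt_one hmass).2 hlt))

variable [Fintype X]

noncomputable def marginalSelfInfo (p : U × X → ℝ) (a : U × X) : ℝ :=
  logb 2 (1 / ∑ x, p (a.1, x))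

lemma sum_mul_marginalSelfInfo (p : U × X → ℝ) :
    ∑ a, p a * marginalSelfInfo p a = HOf p Prod.fst := by
  have hfiber (u : U) : ∑ a ∈ univ.filter (fun a : U × X => a.1 = u), p a = ∑ x, p (u, x) := by
    rw [sum_filter, Fintype.sum_prod_type, sum_eq_single u (fun b _ hb => by simp [hb]) (by simp)]
    simp
  rw [← neg_neg (HOf p Prod.fst), ← sum_mul_logb_fiber_mass, ← sum_neg_distrib]
  refine sum_congr rfl fun a _ => ?_
  rw [marginalSelfInfo, hfiber, one_div, logb_inv, mul_neg]

lemma sum_mul_condSelfInfo (hpos : ∀ a, 0 < p a) :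
    ∑ a, p a * condSelfInfo p a = condHOf p Prod.fst Prod.snd := by
  have hfiber_snd (x : X) :
      ∑ a ∈ univ.filter (fun a : U × X => a.2 = x), p a = ∑ u, p (u, x) := by
    rw [sum_filter, Fintype.sum_prod_type_right,
      sum_eq_single x (fun b _ hb => by simp [hb]) (by simp)]
    simp
  have hsnd : ∑ a, p a * logb 2 (∑ u, p (u, a.2)) = -HOf p Prod.snd := by
    simpa only [hfiber_snd] using sum_mul_logb_fiber_mass p Prod.snd
  have hpair : ∑ a, p a * logb 2 (p a) = -HOf p (fun a => (a.1, a.2)) := by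
    convert sum_mul_logb_fiber_mass p (fun a => a) using 5 with a
    rw [sum_filter, eq_comm]
    refine (sum_eq_single a (fun b _ hb => if_neg hb) (by simp)).trans (if_pos rfl)
  calc ∑ a, p a * condSelfInfo p a
      = ∑ a, (p a * logb 2 (∑ u, p (u, a.2)) - p a * logb 2 (p a)) := by
        refine sum_congr rfl fun a _ => ?_
        have hmass : 0 < ∑ u, p (u, a.2) := sum_pos (fun u _ => hpos _) ⟨a.1, mem_univ _⟩
        rw [condSelfInfo, one_div_div, logb_div hmass.ne' (hpos a).ne', mul_sub]
    _ = condHOf p Prod.fst Prod.snd := by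
        rw [sum_sub_distrib, hsnd, hpair, condHOf]
        ring

lemma marginalSelfInfo_pos (hp : IsPMF p) (hpos : ∀ a, 0 < p a) (hU : 1 < Fintype.card U)
    (a : U × X) : 0 < marginalSelfInfo p a := by
  obtain ⟨u, hu⟩ := Fintype.exists_ne_of_one_lt_card hU a.1
  have hmass (u : U) : 0 < ∑ x, p (u, x) := sum_pos (fun x _ => hpos _) ⟨a.2, mem_univ _⟩
  have hlt : ∑ x, p (a.1, x) < 1 := by
    rw [← hp.2, Fintype.sum_prod_type]
    exact single_lt_sum (f := fun u => ∑ x, p (u, x)) hu (mem_univ _) (mem_univ _) (hmass u)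
      fun u _ _ => (hmass u).le
  exact logb_pos one_lt_two (one_lt_one_div (hmass a.1) hlt)

lemma condHOf_fst_snd_pos [Nonempty X] (hpos : ∀ a, 0 < p a) (hU : 1 < Fintype.card U) :
    0 < condHOf p Prod.fst Prod.snd := by
  have : Nonempty U := Fintype.card_pos_iff.1 (by omega)
  rw [← sum_mul_condSelfInfo hpos]
  exact sum_pos (fun a _ => mul_pos (hpos a) (condSelfInfo_pos hpos hU a)) univ_nonempty

lemma HOf_fst_pos [Nonempty X] (hp : IsPMF p) (hpos : ∀ a, 0 < p a) (hU : 1 < Fintype.card U) :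
    0 < HOf p Prod.fst := by
  have : Nonempty U := Fintype.card_pos_iff.1 (by omega)
  rw [← sum_mul_marginalSelfInfo]
  exact sum_pos (fun a _ => mul_pos (hpos a) (marginalSelfInfo_pos hp hpos hU a)) univ_nonempty

variable {ι : Type*} [DecidableEq ι]

noncomputable def mixedSelfInfo (p : U × X → ℝ) (S : Finset ι) (k : ι) : U × X → ℝ :=
  if k ∈ S then condSelfInfo p else marginalSelfInfo p

lemma sum_mul_mixedSelfInfo (hpos : ∀ a, 0 < p a) (S : Finset ι) (k : ι) :
    ∑ a, p a * mixedSelfInfo p S k a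
      = if k ∈ S then condHOf p Prod.fst Prod.snd else HOf p Prod.fst := by
  unfold mixedSelfInfo
  split_ifs
  exacts [sum_mul_condSelfInfo hpos, sum_mul_marginalSelfInfo p]

lemma min_le_sum_mul_mixedSelfInfo (hpos : ∀ a, 0 < p a) (S : Finset ι) (k : ι) :
    min (condHOf p Prod.fst Prod.snd) (HOf p Prod.fst) ≤ ∑ a, p a * mixedSelfInfo p S k a := by
  rw [sum_mul_mixedSelfInfo hpos]
  split_ifs
  exacts [min_le_left _ _, min_le_right _ _]

lemma mixedSelfInfo_pos (hp : IsPMF p) (hpos : ∀ a, 0 < p a) (hU : 1 < Fintype.card U)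
    (S : Finset ι) (k : ι) (a : U × X) : 0 < mixedSelfInfo p S k a := by
  unfold mixedSelfInfo
  split_ifs
  exacts [condSelfInfo_pos hpos hU a, marginalSelfInfo_pos hp hpos hU a]

lemma mixedSelfInfo_le_max (S : Finset ι) (k : ι) (a : U × X) :
    mixedSelfInfo p S k a ≤ max (condSelfInfo p a) (marginalSelfInfo p a) := by
  unfold mixedSelfInfo
  split_ifs
  exacts [le_max_left _ _, le_max_right _ _]

variable [Fintype ι]

lemma sum_mixedSelfInfo (S : Finset ι) (z : ι → U × X) :
    ∑ k, mixedSelfInfo p S k (z k)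
      = ∑ k ∈ S, condSelfInfo p (z k) + ∑ k ∈ Sᶜ, marginalSelfInfo p (z k) := by
  rw [← sum_ite_mem_eq_sum_add_sum_compl]
  exact sum_congr rfl fun k _ => apply_ite (fun g : U × X → ℝ => g (z k)) _ _ _

lemma sum_sum_mul_mixedSelfInfo (hpos : ∀ a, 0 < p a) (S : Finset ι) :
    ∑ k, ∑ a, p a * mixedSelfInfo p S k a
      = #S * condHOf p Prod.fst Prod.snd + ((Fintype.card ι - #S : ℕ) : ℝ) * HOf p Prod.fst := by
  simp only [sum_mul_mixedSelfInfo hpos, sum_ite_mem_eq_sum_add_sum_compl, sum_const, card_compl,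
    nsmul_eq_mul]

end SelfInformation

/-- for an i.i.d. source of pairs `(U,X)` with full-support joint pmf and
`|𝒰| ≥ 2`, the probability that the mixed empirical self-information (conditional on
positions in `S`, marginal elsewhere) falls below `(1-ε)[μH(U|X) + (n-μ)H(U)]` decays
exponentially in `n`, uniformly over `n`, `μ` and subsets `S` of size `μ`. -/
theorem mixed_self_information_large_deviation {U X : Type} [Fintype U] [Fintype X]
    (p : U × X → ℝ) (hp : IsPMF p) (hpos : ∀ ux, 0 < p ux) (hcard : 2 ≤ Fintype.card U)
    (ε : ℝ) (hε : 0 < ε) :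
    ∃ β > 0, ∀ n ≥ 1, ∀ μ ≤ n, ∀ S : Finset (Fin n), S.card = μ →
      ∑ z ∈ Finset.univ.filter (fun z : Fin n → U × X =>
          (∑ k ∈ S, Real.logb 2 (1 / (p (z k) / ∑ u, p (u, (z k).2))))
            + (∑ k ∈ Sᶜ, Real.logb 2 (1 / ∑ x, p ((z k).1, x)))
          ≤ (1 - ε) * ((μ : ℝ) * condHOf p Prod.fst Prod.snd
              + ((n - μ : ℕ) : ℝ) * HOf p Prod.fst)),
        ∏ k, p (z k)
      ≤ Real.exp (-β * n) := by
  obtain ⟨a₀⟩ : Nonempty (U × X) := by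
    by_contra h
    simpa [not_nonempty_iff.1 h] using hp.2
  have : Nonempty X := ⟨a₀.2⟩
  set m := min (condHOf p Prod.fst Prod.snd) (HOf p Prod.fst)
  have hm : 0 < m := lt_min (condHOf_fst_snd_pos hpos hcard) (HOf_fst_pos hp hpos hcard)
  obtain ⟨B, hB⟩ := Finite.exists_le fun a => max (condSelfInfo p a) (marginalSelfInfo p a)
  have hB₀ : 0 < B := (condSelfInfo_pos hpos hcard a₀).trans_le
    ((le_max_left _ _).trans (hB a₀))
  refine ⟨ε ^ 2 * m ^ 2 / (4 * B ^ 2), by positivity, fun n _ μ _ S hS => ?_⟩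
  have key := hp.sum_prod_filter_le_exp_neg_sq (f := mixedSelfInfo p S)
    (fun k a => (mixedSelfInfo_pos hp hpos hcard S k a).le)
    (fun k a => (mixedSelfInfo_le_max S k a).trans (hB a)) hB₀ hε.le hm.le
    (min_le_sum_mul_mixedSelfInfo hpos S)
  simp only [sum_mixedSelfInfo, sum_sum_mul_mixedSelfInfo hpos, Fintype.card_fin, hS] at key
  exact key
end
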